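/- If π(x) = li(x) + O(x^{1/2+ε}) for every ε > 0 (a consequence of the Riemann hypothesis), then there exists B ∈ ℝ such that for every ε > 0, ∑_{2 ≤ n ≤ x} 1/π(n) = log x · log(li(x)) − ∫_3^x log(li(t))/t dt + B + O(x^{−1/2+ε}) as x → ∞. -/

import Mathlib

open Filter Real

noncomputable def li (x : ℝ) : ℝ := ∫ t in (2:ℝ)..x, 1 / Real.log t

noncomputable def primePi (x : ℝ) : ℝ := Nat.primeCounting ⌊x⌋₊

/-
Since `π` is constant on each `[n, n + 1)`, the sum `∑_{2 ≤ n ≤ x} 1/π(n)` equals `∫_2^x dt/π(t)`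
up to a boundary piece of size at most `1/π(x)`. Integrating by parts,
`log x · log li(x) - ∫_3^x log li(t)/t dt = ∫_3^x dt/li(t) + log 3 · log li(3)`,
so the error is `∫_3^x (1/π - 1/li)` plus constants. Under the hypothesis `π ~ li` and
`li(t) ≥ t^(1-ε)`, hence `1/π - 1/li = (li - π)/(π li) = O(t^(-3/2+ε))`: this is integrable on
`(3, ∞)` with tail `O(x^(-1/2+ε))`, and `B` absorbs its full integral.
-/

open Asymptotics MeasureTheory Set

lemma isBigO_rpow_rpow_atTop_of_le {a b : ℝ} (h : a ≤ b) :
    (fun x : ℝ => x ^ a) =O[atTop] fun x => x ^ b :=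
  IsBigO.of_bound' <| by
    filter_upwards [eventually_ge_atTop 1] with x hx
    rw [norm_of_nonneg (by positivity), norm_of_nonneg (by positivity)]
    exact rpow_le_rpow_of_exponent_le hx h

lemma isLittleO_rpow_rpow_atTop {a b : ℝ} (h : a < b) :
    (fun x : ℝ => x ^ a) =o[atTop] fun x => x ^ b := by
  refine (isLittleO_iff_tendsto' ?_).2 ((tendsto_rpow_neg_atTop (sub_pos.2 h)).congr' ?_)
  · filter_upwards [eventually_gt_atTop 0] with x hx h0
    exact absurd h0 (rpow_pos_of_pos hx b).ne'
  · filter_upwards [eventually_gt_atTop 0] with x hx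
    rw [neg_sub, rpow_sub hx]

lemma uIcc_subset_Ioi {a b c : ℝ} (ha : c < a) (hb : c < b) : uIcc a b ⊆ Ioi c :=
  fun _ ht => (lt_inf_iff.2 ⟨ha, hb⟩).trans_le ht.1

lemma integral_Ioi_isBigO_rpow {E : Type*} [NormedAddCommGroup E] [NormedSpace ℝ E]
    {f : ℝ → E} {p : ℝ} (hp : 1 < p) (hf : f =O[atTop] fun x => x ^ (-p)) :
    (fun x => ∫ t in Ioi x, f t) =O[atTop] fun x => x ^ (1 - p) := by
  obtain ⟨C, hC⟩ := hf.bound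
  obtain ⟨T, hT⟩ := eventually_atTop.1 hC
  refine IsBigO.of_bound (C / (p - 1)) ?_
  filter_upwards [eventually_ge_atTop T, eventually_gt_atTop 0] with x hxT hx
  have hbound : ∀ᵐ t ∂volume.restrict (Ioi x), ‖f t‖ ≤ C * t ^ (-p) := by
    filter_upwards [ae_restrict_mem measurableSet_Ioi] with t ht
    have ht0 : 0 < t := hx.trans ht
    simpa [norm_of_nonneg (rpow_pos_of_pos ht0 _).le] using hT t (hxT.trans ht.le)
  calc ‖∫ t in Ioi x, f t‖
      ≤ ∫ t in Ioi x, C * t ^ (-p) :=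
        norm_integral_le_of_norm_le
          ((integrableOn_Ioi_rpow_of_lt (by linarith) hx).const_mul C) hbound
    _ = C / (p - 1) * ‖x ^ (1 - p)‖ := by
        rw [MeasureTheory.integral_const_mul, integral_Ioi_rpow_of_lt (by linarith) hx,
          norm_of_nonneg (rpow_pos_of_pos hx _).le, show -p + 1 = 1 - p by ring]
        rw [neg_div, ← div_neg, neg_sub]
        ring

lemma sum_Ico_eq_integral_comp_floor {E : Type*} [NormedAddCommGroup E] [NormedSpace ℝ E]
    [CompleteSpace E] (g : ℕ → E) {m n : ℕ} (hmn : m ≤ n) :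
    ∑ k ∈ Finset.Ico m n, g k = ∫ t in (m : ℝ)..n, g ⌊t⌋₊ := by
  have hconst : ∀ k : ℕ,
      EqOn (fun _ => g k) (fun t : ℝ => g ⌊t⌋₊) (uIoo (k : ℝ) (k + 1 : ℕ)) := by
    intro k t ht
    rw [uIoo_of_le (by push_cast; linarith)] at ht
    simp only [Nat.floor_eq_on_Ico k t ⟨ht.1.le, by exact_mod_cast ht.2⟩]
  rw [← intervalIntegral.sum_integral_adjacent_intervals_Ico (a := fun k : ℕ => (k : ℝ)) hmn
    fun k _ => intervalIntegrable_const.congr_uIoo (hconst k)]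
  refine Finset.sum_congr rfl fun k _ => ?_
  rw [← intervalIntegral.integral_congr_uIoo (hconst k), intervalIntegral.integral_const]
  simp

lemma continuousOn_one_div_log : ContinuousOn (fun t => 1 / log t) (Ioi 1) :=
  continuousOn_const.div (continuousOn_log.mono fun _ ht => (zero_lt_one.trans ht).ne')
    fun _ ht => (log_pos ht).ne'

lemma hasDerivAt_li {x : ℝ} (hx : 1 < x) : HasDerivAt li (1 / log x) x :=
  intervalIntegral.integral_hasDerivAt_right
    (continuousOn_one_div_log.mono (uIcc_subset_Ioi one_lt_two hx)).intervalIntegrable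
    (continuousOn_one_div_log.stronglyMeasurableAtFilter isOpen_Ioi x hx)
    (continuousOn_one_div_log.continuousAt (Ioi_mem_nhds hx))

lemma continuousOn_li : ContinuousOn li (Ioi 1) :=
  fun _ hx => (hasDerivAt_li hx).continuousAt.continuousWithinAt

lemma div_log_le_li {x : ℝ} (hx : 2 ≤ x) : (x - 2) / log x ≤ li x := by
  have hlog : 0 < log x := log_pos (by linarith)
  have hint : IntervalIntegrable (fun t => 1 / log t) volume 2 x :=
    (continuousOn_one_div_log.mono (uIcc_subset_Ioi one_lt_two (by linarith))).intervalIntegrable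
  have hmono : ∫ _ in (2:ℝ)..x, 1 / log x ≤ li x :=
    intervalIntegral.integral_mono_on hx intervalIntegrable_const hint fun _ ht =>
      one_div_le_one_div_of_le (log_pos (by linarith [ht.1])) (log_le_log (by linarith [ht.1]) ht.2)
  rwa [intervalIntegral.integral_const, smul_eq_mul, mul_one_div] at hmono

lemma li_pos {x : ℝ} (hx : 2 < x) : 0 < li x :=
  (div_pos (by linarith) (log_pos (by linarith))).trans_le (div_log_le_li hx.le)

lemma eventually_rpow_le_li {δ : ℝ} (hδ : 0 < δ) :
    ∀ᶠ x in atTop, x ^ (1 - δ) ≤ li x := by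
  filter_upwards [(isLittleO_log_rpow_atTop hδ).bound (by norm_num : (0:ℝ) < 1 / 2),
    eventually_ge_atTop 4] with x hlog hx
  have hx0 : 0 < x := by linarith
  have hlogx : 0 < log x := log_pos (by linarith)
  rw [norm_of_nonneg hlogx.le, norm_of_nonneg (rpow_pos_of_pos hx0 _).le] at hlog
  calc x ^ (1 - δ) = (x / 2) / (1 / 2 * x ^ δ) := by
        rw [rpow_sub hx0, rpow_one]; field_simp
    _ ≤ (x / 2) / log x := div_le_div_of_nonneg_left (by positivity) hlogx hlog
    _ ≤ (x - 2) / log x := div_le_div_of_nonneg_right (by linarith) hlogx.le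
    _ ≤ li x := div_log_le_li (by linarith)

lemma rpow_isBigO_li {δ : ℝ} (hδ : 0 < δ) : (fun x : ℝ => x ^ (1 - δ)) =O[atTop] li :=
  IsBigO.of_bound' <| by
    filter_upwards [eventually_rpow_le_li hδ, eventually_ge_atTop 0] with x h hx
    rwa [norm_of_nonneg (by positivity), norm_of_nonneg ((rpow_nonneg hx _).trans h)]

lemma inv_li_isBigO {δ : ℝ} (hδ : 0 < δ) :
    (fun x => (li x)⁻¹) =O[atTop] fun x : ℝ => x ^ (δ - 1) := by
  refine ((rpow_isBigO_li hδ).inv_rev ?_).trans_eventuallyEq ?_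
  · filter_upwards [eventually_gt_atTop 0] with x hx h
    exact absurd h (rpow_pos_of_pos hx _).ne'
  · filter_upwards [eventually_gt_atTop 0] with x hx
    rw [← rpow_neg hx.le, neg_sub]

lemma continuousOn_inv_li : ContinuousOn (fun x => (li x)⁻¹) (Ioi 2) :=
  (continuousOn_li.mono (Ioi_subset_Ioi one_le_two)).inv₀ fun _ hx => (li_pos hx).ne'

lemma primePi_pos {x : ℝ} (hx : 2 ≤ x) : 0 < primePi x := by
  have h2 : 2 ≤ ⌊x⌋₊ := Nat.le_floor (by exact_mod_cast hx)
  exact Nat.cast_pos.2 (Nat.pos_of_ne_zero (by rw [Ne, Nat.primeCounting_eq_zero_iff]; omega))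

lemma antitoneOn_inv_primePi : AntitoneOn (fun x => (primePi x)⁻¹) (Ici 2) :=
  fun _ ha _ _ hab => inv_anti₀ (primePi_pos ha) <|
    Nat.cast_le.2 (Nat.monotone_primeCounting (Nat.floor_le_floor hab))

lemma primePi_isEquivalent_li {a : ℝ} (ha : a < 1)
    (h : (fun x => primePi x - li x) =O[atTop] fun x => x ^ a) : primePi ~[atTop] li :=
  IsLittleO.isEquivalent <| h.trans_isLittleO <|
    (isLittleO_rpow_rpow_atTop (b := 1 - (1 - a) / 2) (by linarith)).trans_isBigO
      (rpow_isBigO_li (by linarith))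

lemma inv_primePi_isBigO (h : primePi ~[atTop] li) {δ : ℝ} (hδ : 0 < δ) :
    (fun x => (primePi x)⁻¹) =O[atTop] fun x : ℝ => x ^ (δ - 1) :=
  h.inv.isBigO.trans (inv_li_isBigO hδ)

lemma inv_primePi_sub_inv_li_isBigO
    (hR : ∀ ε : ℝ, 0 < ε →
      (fun x : ℝ => primePi x - li x) =O[atTop] (fun x : ℝ => x ^ ((1:ℝ)/2 + ε)))
    {ε : ℝ} (hε : 0 < ε) :
    (fun x => (primePi x)⁻¹ - (li x)⁻¹) =O[atTop] fun x : ℝ => x ^ (-(3/2 - ε)) := by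
  have hequiv := primePi_isEquivalent_li (by norm_num) (hR (1/4) (by norm_num))
  have hprod := (hR (ε/3) (by positivity)).neg_left.mul
    ((inv_primePi_isBigO hequiv (δ := ε/3) (by positivity)).mul
      (inv_li_isBigO (δ := ε/3) (by positivity)))
  refine hprod.congr' ?_ ?_
  · filter_upwards [eventually_gt_atTop 2] with x hx
    have := (primePi_pos hx.le).ne'
    have := (li_pos hx).ne'
    field_simp
    ring
  · filter_upwards [eventually_gt_atTop 0] with x hx
    rw [← rpow_add hx, ← rpow_add hx]
    ring_nf

lemma integrableOn_inv_primePi_sub_inv_li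
    (hR : ∀ ε : ℝ, 0 < ε →
      (fun x : ℝ => primePi x - li x) =O[atTop] (fun x : ℝ => x ^ ((1:ℝ)/2 + ε))) :
    IntegrableOn (fun x => (primePi x)⁻¹ - (li x)⁻¹) (Ioi 3) := by
  have hinv_primePi : LocallyIntegrableOn (fun x => (primePi x)⁻¹) (Ici 3) :=
    (locallyIntegrableOn_iff isClosed_Ici.isLocallyClosed).2 fun _ hk hkc =>
      (antitoneOn_inv_primePi.mono
        (hk.trans (Ici_subset_Ici.2 (by norm_num)))).integrableOn_isCompact hkc
  have hinv_li : LocallyIntegrableOn (fun x => (li x)⁻¹) (Ici 3) :=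
    (continuousOn_inv_li.mono (Ici_subset_Ioi.2 (by norm_num))).locallyIntegrableOn
      measurableSet_Ici
  exact ((hinv_primePi.sub hinv_li).integrableOn_of_isBigO_atTop
    (inv_primePi_sub_inv_li_isBigO hR (ε := 1/4) (by norm_num))
    (integrableAtFilter_rpow_atTop_iff.2 (by norm_num))).mono_set Ioi_subset_Ici_self

lemma intervalIntegrable_inv_primePi {a b : ℝ} (ha : 2 ≤ a) (hb : 2 ≤ b) :
    IntervalIntegrable (fun t => (primePi t)⁻¹) volume a b :=
  (antitoneOn_inv_primePi.mono fun _ ht =>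
    mem_Ici.2 ((le_min ha hb).trans ht.1)).intervalIntegrable

lemma log_mul_log_li_sub_integral {a x : ℝ} (ha : 2 < a) (hax : a ≤ x) :
    log x * log (li x) - ∫ t in a..x, log (li t) / t =
      (∫ t in a..x, (li t)⁻¹) + log a * log (li a) := by
  have hsub : uIcc a x ⊆ Ioi 2 := uIcc_subset_Ioi ha (ha.trans_le hax)
  have hderiv : ∀ t ∈ uIcc a x,
      HasDerivAt (fun u => log u * log (li u)) (log (li t) / t + (li t)⁻¹) t := by
    intro t ht
    have ht2 : 2 < t := hsub ht
    have hlog : log t ≠ 0 := (log_pos (by linarith)).ne'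
    refine ((hasDerivAt_log (by linarith : t ≠ 0)).mul
      ((hasDerivAt_li (by linarith : 1 < t)).log (li_pos ht2).ne')).congr_deriv ?_
    field_simp
  have hint₁ : IntervalIntegrable (fun t => log (li t) / t) volume a x :=
    (((continuousOn_li.mono (hsub.trans (Ioi_subset_Ioi one_le_two))).log
      fun t ht => (li_pos (hsub ht)).ne').div continuousOn_id
        fun t ht => (zero_lt_two.trans (hsub ht)).ne').intervalIntegrable
  have hint₂ : IntervalIntegrable (fun t => (li t)⁻¹) volume a x :=
    (continuousOn_inv_li.mono hsub).intervalIntegrable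
  have hftc := intervalIntegral.integral_eq_sub_of_hasDerivAt hderiv (hint₁.add hint₂)
  rw [intervalIntegral.integral_add hint₁ hint₂] at hftc
  linarith

lemma norm_integral_inv_primePi_le {x : ℝ} (hx : 2 ≤ x) :
    ‖∫ t in x..((⌊x⌋₊ + 1 : ℕ) : ℝ), (primePi t)⁻¹‖ ≤ (primePi x)⁻¹ := by
  have hx0 : 0 ≤ x := by linarith
  have hle : x ≤ ((⌊x⌋₊ + 1 : ℕ) : ℝ) := by push_cast; exact (Nat.lt_floor_add_one x).le
  have hlen : |((⌊x⌋₊ + 1 : ℕ) : ℝ) - x| ≤ 1 := by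
    rw [abs_of_nonneg (by linarith)]; push_cast; linarith [Nat.floor_le hx0]
  calc ‖∫ t in x..((⌊x⌋₊ + 1 : ℕ) : ℝ), (primePi t)⁻¹‖
      ≤ (primePi x)⁻¹ * |((⌊x⌋₊ + 1 : ℕ) : ℝ) - x| := by
        refine intervalIntegral.norm_integral_le_of_norm_le_const fun t ht => ?_
        rw [uIoc_of_le hle] at ht
        have ht2 : 2 ≤ t := by linarith [ht.1]
        rw [norm_of_nonneg (inv_pos.2 (primePi_pos ht2)).le]
        exact antitoneOn_inv_primePi hx ht2 ht.1.le
    _ ≤ (primePi x)⁻¹ := mul_le_of_le_one_right (inv_pos.2 (primePi_pos hx)).le hlen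

lemma sum_inv_primeCounting_eq {x : ℝ} (hx : 3 ≤ x)
    (he : IntegrableOn (fun t => (primePi t)⁻¹ - (li t)⁻¹) (Ioi 3)) :
    ∑ n ∈ Finset.Icc 2 ⌊x⌋₊, 1 / (Nat.primeCounting n : ℝ) =
      (∫ t in (2:ℝ)..3, (primePi t)⁻¹) + (∫ t in (3:ℝ)..x, (li t)⁻¹) +
        (∫ t in Ioi 3, ((primePi t)⁻¹ - (li t)⁻¹)) -
        (∫ t in Ioi x, ((primePi t)⁻¹ - (li t)⁻¹)) +
        ∫ t in x..((⌊x⌋₊ + 1 : ℕ) : ℝ), (primePi t)⁻¹ := by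
  have hN : 2 ≤ ⌊x⌋₊ + 1 := by have := Nat.le_floor (n := 3) (by exact_mod_cast hx); omega
  have hsum : ∑ n ∈ Finset.Icc 2 ⌊x⌋₊, 1 / (Nat.primeCounting n : ℝ) =
      ∫ t in (2:ℝ)..((⌊x⌋₊ + 1 : ℕ) : ℝ), (primePi t)⁻¹ := by
    rw [← Finset.Ico_add_one_right_eq_Icc,
      sum_Ico_eq_integral_comp_floor (fun n => 1 / (Nat.primeCounting n : ℝ)) hN]
    simp only [one_div, Nat.cast_ofNat]
    rfl
  have hx' : 2 ≤ ((⌊x⌋₊ + 1 : ℕ) : ℝ) := by exact_mod_cast hN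
  have htail := intervalIntegral.integral_Ioi_sub_Ioi he hx
  rw [intervalIntegral.integral_sub
    (intervalIntegrable_inv_primePi (a := 3) (by norm_num) (by linarith))
    (continuousOn_inv_li.mono (uIcc_subset_Ioi (by norm_num) (by linarith))).intervalIntegrable]
    at htail
  rw [hsum, ← intervalIntegral.integral_add_adjacent_intervals
      (intervalIntegrable_inv_primePi (b := 3) le_rfl (by norm_num))
      (intervalIntegrable_inv_primePi (a := 3) (by norm_num) hx'),
    ← intervalIntegral.integral_add_adjacent_intervals
      (intervalIntegrable_inv_primePi (a := 3) (by norm_num) (by linarith : 2 ≤ x))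
      (intervalIntegrable_inv_primePi (by linarith) hx')]
  linarith

theorem sum_formula_RH
    (hR : ∀ ε : ℝ, 0 < ε →
      (fun x : ℝ => primePi x - li x)
        =O[atTop] (fun x : ℝ => x ^ ((1:ℝ)/2 + ε))) :
    ∃ B : ℝ, ∀ ε : ℝ, 0 < ε →
      (fun x : ℝ => (∑ n ∈ Finset.Icc 2 ⌊x⌋₊, 1 / (Nat.primeCounting n : ℝ)) -
          (Real.log x * Real.log (li x) -
            (∫ t in (3:ℝ)..x, Real.log (li t) / t) + B))
        =O[atTop] (fun x : ℝ => x ^ (-(1:ℝ)/2 + ε)) := by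
  have he := integrableOn_inv_primePi_sub_inv_li hR
  have hequiv := primePi_isEquivalent_li (by norm_num) (hR (1/4) (by norm_num))
  refine ⟨(∫ t in (2:ℝ)..3, (primePi t)⁻¹) + (∫ t in Ioi 3, ((primePi t)⁻¹ - (li t)⁻¹)) -
    log 3 * log (li 3), fun ε hε => ?_⟩
  have hrem : (fun x => ∫ t in x..((⌊x⌋₊ + 1 : ℕ) : ℝ), (primePi t)⁻¹)
      =O[atTop] fun x : ℝ => x ^ (-(1:ℝ)/2 + ε) := by
    refine (IsBigO.of_bound' ?_).trans
      ((inv_primePi_isBigO hequiv (δ := 1/2 + ε) (by positivity)).trans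
        (isBigO_rpow_rpow_atTop_of_le (by linarith)))
    filter_upwards [eventually_ge_atTop 2] with x hx
    rw [norm_of_nonneg (inv_pos.2 (primePi_pos hx)).le]
    exact norm_integral_inv_primePi_le hx
  have htail : (fun x => ∫ t in Ioi x, ((primePi t)⁻¹ - (li t)⁻¹))
      =O[atTop] fun x : ℝ => x ^ (-(1:ℝ)/2 + ε) := by
    have hε' : 0 < min ε (1/4) := lt_min hε (by norm_num)
    have hp : 1 < 3/2 - min ε (1/4) := by linarith [min_le_right ε (1/4)]
    exact (integral_Ioi_isBigO_rpow hp (inv_primePi_sub_inv_li_isBigO hR hε')).trans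
      (isBigO_rpow_rpow_atTop_of_le (by linarith [min_le_left ε (1/4)]))
  refine (hrem.sub htail).congr' ?_ EventuallyEq.rfl
  filter_upwards [eventually_ge_atTop 3] with x hx
  rw [sum_inv_primeCounting_eq hx he, log_mul_log_li_sub_integral (by norm_num) hx]
  ring
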